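/- arXiv:0802.0146 — 3 statements merged into one kernel-verified Lean document; each statement's English description precedes it below -/
import Mathlib

section
/- Let G act freely and properly on M, let L be a regular Lagrangian on TM invariant under the lifted action (equivalently ξ̃^C(L)=0 for all ξ in the Lie algebra 𝔤, where ξ̃ is the fundamental vector field), and let Γ be the Euler-Lagrange field of L. Then Γ is invariant: [ξ̃^C, Γ] = 0 for all ξ ∈ 𝔤. -/
open scoped BigOperators

/-- The Lie bracket of vector fields, `[X,Y] = DY(X) - DX(Y)`. -/
noncomputable def lieVF {E : Type*} [NormedAddCommGroup E] [NormedSpace ℝ E]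
    (X Y : E → E) : E → E :=
  fun p => fderiv ℝ Y p (X p) - fderiv ℝ X p (Y p)

/-- The complete lift of a vector field. -/
noncomputable def cLift {E : Type*} [NormedAddCommGroup E] [NormedSpace ℝ E]
    (Z : E → E) : E × E → E × E :=
  fun p => (Z p.1, fderiv ℝ Z p.1 p.2)

/-- The vertical lift of a vector field. -/
def vLift {E : Type*} [NormedAddCommGroup E] [NormedSpace ℝ E]
    (Z : E → E) : E × E → E × E :=
  fun p => (0, Z p.1)

/-- The action of a vector field `X` on a function `f`. -/
noncomputable def dvf {E F : Type*} [NormedAddCommGroup E] [NormedSpace ℝ E]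
    [NormedAddCommGroup F] [NormedSpace ℝ F]
    (X : E → E) (f : E → F) : E → F :=
  fun p => fderiv ℝ f p (X p)

open ContinuousLinearMap

section Helpers

variable {F : Type*} [NormedAddCommGroup F] [NormedSpace ℝ F]

theorem sym2 {G : Type*} [NormedAddCommGroup G] [NormedSpace ℝ G]
    (f : F → G) (hf : ContDiff ℝ (⊤ : ℕ∞) f) (p : F) (a b : F) :
    fderiv ℝ (fderiv ℝ f) p a b = fderiv ℝ (fderiv ℝ f) p b a :=
  second_derivative_symmetric (fun y => (hf.differentiable (by simp) y).hasFDerivAt)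
    (((hf.fderiv_right (m := (⊤ : ℕ∞)) (by simp)).differentiable (by simp) p).hasFDerivAt) a b

theorem dvf_dvf (X Y : F → F) (f : F → ℝ) (hf : ContDiff ℝ (⊤ : ℕ∞) f) (p : F)
    (hY : DifferentiableAt ℝ Y p) :
    dvf X (dvf Y f) p
      = fderiv ℝ (fderiv ℝ f) p (X p) (Y p) + fderiv ℝ f p (fderiv ℝ Y p (X p)) := by
  have hc : DifferentiableAt ℝ (fderiv ℝ f) p :=
    (hf.fderiv_right (m := (⊤ : ℕ∞)) (by simp)).differentiable (by simp) p
  have he : dvf Y f = fun q => fderiv ℝ f q (Y q) := rfl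
  simp only [dvf, he]
  rw [fderiv_clm_apply hc hY]
  simp [ContinuousLinearMap.add_apply, ContinuousLinearMap.comp_apply,
    ContinuousLinearMap.flip_apply, add_comm]

theorem dvf_smooth (X : F → F) (f : F → ℝ) (hX : ContDiff ℝ (⊤ : ℕ∞) X) (hf : ContDiff ℝ (⊤ : ℕ∞) f) :
    ContDiff ℝ (⊤ : ℕ∞) (dvf X f) :=
  (hf.fderiv_right (by simp)).clm_apply hX

end Helpers

section Main

variable {E : Type*} [NormedAddCommGroup E] [NormedSpace ℝ E]

theorem cLift_smooth (ξ : E → E) (hξ : ContDiff ℝ (⊤ : ℕ∞) ξ) : ContDiff ℝ (⊤ : ℕ∞) (cLift ξ) :=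
  (hξ.comp contDiff_fst).prodMk
    (((hξ.fderiv_right (by simp)).comp contDiff_fst).clm_apply contDiff_snd)

theorem fderiv_cLift (ξ : E → E) (hξ : ContDiff ℝ (⊤ : ℕ∞) ξ) (p u : E × E) :
    fderiv ℝ (cLift ξ) p u
      = (fderiv ℝ ξ p.1 u.1, fderiv ℝ (fderiv ℝ ξ) p.1 u.1 p.2 + fderiv ℝ ξ p.1 u.2) := by
  have h1 : HasFDerivAt (fun q : E × E => ξ q.1)
      ((fderiv ℝ ξ p.1).comp (fst ℝ E E)) p :=
    ((hξ.differentiable (by simp) p.1).hasFDerivAt).comp p hasFDerivAt_fst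
  have hc : HasFDerivAt (fun q : E × E => fderiv ℝ ξ q.1)
      ((fderiv ℝ (fderiv ℝ ξ) p.1).comp (fst ℝ E E)) p :=
    (((hξ.fderiv_right (m := (⊤ : ℕ∞)) (by simp)).differentiable (by simp) p.1).hasFDerivAt).comp p hasFDerivAt_fst
  have h2 := hc.clm_apply (hasFDerivAt_snd (p := p))
  have h : HasFDerivAt (cLift ξ)
      (((fderiv ℝ ξ p.1).comp (fst ℝ E E)).prod
        ((fderiv ℝ ξ p.1).comp (snd ℝ E E)
          + ((fderiv ℝ (fderiv ℝ ξ) p.1).comp (fst ℝ E E)).flip p.2)) p := h1.prodMk h2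
  rw [h.fderiv]
  simp [ContinuousLinearMap.add_apply, ContinuousLinearMap.comp_apply,
    ContinuousLinearMap.flip_apply, add_comm]

end Main

/-- If `L` is a regular Lagrangian, invariant under the (lifted) action of a connected
symmetry group -- infinitesimally, `ξ̃^C(L) = 0` for every fundamental vector field
`ξ̃` -- then the Euler-Lagrange field `Γ` of `L` is invariant: `[ξ̃^C, Γ] = 0`. -/
theorem eulerLagrangeField_invariant
    {E : Type*} [NormedAddCommGroup E] [NormedSpace ℝ E] [FiniteDimensional ℝ E]
    (L : E × E → ℝ) (hL : ContDiff ℝ (⊤ : ℕ∞) L)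
    (ξ : E → E) (hξ : ContDiff ℝ (⊤ : ℕ∞) ξ)
    (hLinv : ∀ p, dvf (cLift ξ) L p = 0)
    (Γ : E × E → E × E) (hΓ : ContDiff ℝ (⊤ : ℕ∞) Γ)
    (hsode : ∀ p, (Γ p).1 = p.2)
    (hEL : ∀ Z : E → E, ContDiff ℝ (⊤ : ℕ∞) Z →
      ∀ p, dvf Γ (dvf (vLift Z) L) p = dvf (cLift Z) L p)
    (hreg : ∀ (p : E × E) (w : E),
      (∀ v : E, dvf (vLift (fun _ => w)) (dvf (vLift (fun _ => v)) L) p = 0) → w = 0) :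
    lieVF (cLift ξ) Γ = 0 := by
  have hXs := cLift_smooth ξ hξ
  have hXd : ∀ p, DifferentiableAt ℝ (cLift ξ) p := fun p => hXs.differentiable (by simp) p
  have hΓd : ∀ p, DifferentiableAt ℝ Γ p := fun p => hΓ.differentiable (by simp) p
  have hzero : dvf (cLift ξ) L = fun _ => (0 : ℝ) := funext hLinv
  -- the first component of the bracket vanishes
  have hfstΓ : ∀ (p u : E × E), (fderiv ℝ Γ p u).1 = u.2 := by
    intro p u
    have h1 : HasFDerivAt (fun q : E × E => (Γ q).1)
        ((fst ℝ E E).comp (fderiv ℝ Γ p)) p := ((hΓd p).hasFDerivAt).fst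
    have h2 : HasFDerivAt (fun q : E × E => (Γ q).1) (snd ℝ E E) p := by
      have he : (fun q : E × E => (Γ q).1) = fun q : E × E => q.2 := funext hsode
      rw [he]; exact hasFDerivAt_snd
    have h3 := h1.unique h2
    have h4 : ((fst ℝ E E).comp (fderiv ℝ Γ p)) u = (snd ℝ E E) u := by rw [h3]
    simpa using h4
  have hA : ∀ p, (lieVF (cLift ξ) Γ p).1 = 0 := by
    intro p
    have h1 : lieVF (cLift ξ) Γ p
        = fderiv ℝ Γ p (cLift ξ p) - fderiv ℝ (cLift ξ) p (Γ p) := rfl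
    rw [h1, Prod.fst_sub, hfstΓ p (cLift ξ p), fderiv_cLift ξ hξ p (Γ p)]
    simp [cLift, hsode p]
  -- the key vanishing statement
  have key : ∀ (v : E) (p₀ : E × E),
      fderiv ℝ (dvf (vLift (fun _ : E => v)) L) p₀ (lieVF (cLift ξ) Γ p₀) = 0 := by
    intro v p₀
    have hvconst : vLift (fun _ : E => v) = fun _ : E × E => ((0 : E), v) := rfl
    set B : E → E := fun q => -(fderiv ℝ ξ q v) with hB
    have hBs : ContDiff ℝ (⊤ : ℕ∞) B := ((hξ.fderiv_right (by simp)).clm_apply contDiff_const).neg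
    have hfs : ContDiff ℝ (⊤ : ℕ∞) (dvf (vLift (fun _ : E => v)) L) := by
      refine dvf_smooth _ _ ?_ hL
      rw [hvconst]; exact contDiff_const
    have hfB : ∀ q : E, fderiv ℝ B q = -((fderiv ℝ (fderiv ℝ ξ) q).flip v) := by
      intro q
      have h1 : fderiv ℝ (fun x : E => fderiv ℝ ξ x v) q
          = (fderiv ℝ ξ q).comp (fderiv ℝ (fun _ : E => v) q)
            + (fderiv ℝ (fderiv ℝ ξ) q).flip v :=
        fderiv_clm_apply ((hξ.fderiv_right (m := (⊤ : ℕ∞)) (by simp)).differentiable (by simp) q)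
          (differentiableAt_const _)
      have h2 : fderiv ℝ B q = -(fderiv ℝ (fun x : E => fderiv ℝ ξ x v) q) := by
        rw [hB]
        exact fderiv_neg
      rw [h2, h1]
      simp
    -- E3 : X(Z^V L) = [ξ,Z]^V L for constant Z = v
    have hE3 : dvf (cLift ξ) (dvf (vLift (fun _ : E => v)) L) = dvf (vLift B) L := by
      funext p
      rw [hvconst]
      have h1 := dvf_dvf (cLift ξ) (fun _ : E × E => ((0 : E), v)) L hL p
        (differentiableAt_const _)
      simp only [fderiv_fun_const, Pi.zero_apply, ContinuousLinearMap.zero_apply, map_zero,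
        add_zero] at h1
      rw [h1]
      have h2 := dvf_dvf (fun _ : E × E => ((0 : E), v)) (cLift ξ) L hL p (hXd p)
      have hz2 : dvf (fun _ : E × E => ((0 : E), v)) (dvf (cLift ξ) L) p = 0 := by
        have : dvf (fun _ : E × E => ((0 : E), v)) (dvf (cLift ξ) L) p
            = fderiv ℝ (dvf (cLift ξ) L) p ((0 : E), v) := rfl
        rw [this, hzero]
        simp
      have hXv : fderiv ℝ (cLift ξ) p ((0 : E), v) = ((0 : E), fderiv ℝ ξ p.1 v) := by
        rw [fderiv_cLift ξ hξ]; simp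
      rw [hz2, hXv] at h2
      have hsymL := sym2 L hL p (cLift ξ p) ((0 : E), v)
      rw [hsymL]
      have h3 : fderiv ℝ (fderiv ℝ L) p ((0 : E), v) (cLift ξ p)
          = -(fderiv ℝ L p ((0 : E), fderiv ℝ ξ p.1 v)) := by linarith
      rw [h3]
      have h4 : dvf (vLift B) L p = fderiv ℝ L p ((0 : E), -(fderiv ℝ ξ p.1 v)) := rfl
      rw [h4]
      have h5 : ((0 : E), -(fderiv ℝ ξ p.1 v)) = -(((0 : E), fderiv ℝ ξ p.1 v) : E × E) := by
        simp [Prod.ext_iff]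
      rw [h5, map_neg]
    -- E4 : X(Z^C L) = [ξ,Z]^C L for constant Z = v
    have hE4 : dvf (cLift ξ) (dvf (cLift (fun _ : E => v)) L) = dvf (cLift B) L := by
      funext p
      have hcconst : cLift (fun _ : E => v) = fun _ : E × E => (v, (0 : E)) := by
        funext q; simp [cLift]
      rw [hcconst]
      have h1 := dvf_dvf (cLift ξ) (fun _ : E × E => (v, (0 : E))) L hL p
        (differentiableAt_const _)
      simp only [fderiv_fun_const, Pi.zero_apply, ContinuousLinearMap.zero_apply, map_zero,
        add_zero] at h1
      rw [h1]
      have h2 := dvf_dvf (fun _ : E × E => (v, (0 : E))) (cLift ξ) L hL p (hXd p)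
      have hz2 : dvf (fun _ : E × E => (v, (0 : E))) (dvf (cLift ξ) L) p = 0 := by
        have : dvf (fun _ : E × E => (v, (0 : E))) (dvf (cLift ξ) L) p
            = fderiv ℝ (dvf (cLift ξ) L) p (v, (0 : E)) := rfl
        rw [this, hzero]
        simp
      have hXv : fderiv ℝ (cLift ξ) p (v, (0 : E))
          = (fderiv ℝ ξ p.1 v, fderiv ℝ (fderiv ℝ ξ) p.1 v p.2) := by
        rw [fderiv_cLift ξ hξ]; simp
      rw [hz2, hXv] at h2
      have hsymL := sym2 L hL p (cLift ξ p) (v, (0 : E))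
      rw [hsymL]
      have h3 : fderiv ℝ (fderiv ℝ L) p (v, (0 : E)) (cLift ξ p)
          = -(fderiv ℝ L p (fderiv ℝ ξ p.1 v, fderiv ℝ (fderiv ℝ ξ) p.1 v p.2)) := by linarith
      have h4 : dvf (cLift B) L p = fderiv ℝ L p (B p.1, fderiv ℝ B p.1 p.2) := rfl
      have hsymξ := sym2 ξ hξ p.1 p.2 v
      have hpair : ((B p.1, fderiv ℝ B p.1 p.2) : E × E)
          = -((fderiv ℝ ξ p.1 v, fderiv ℝ (fderiv ℝ ξ) p.1 v p.2) : E × E) := by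
        rw [hfB p.1]
        simp [hB, Prod.ext_iff, ContinuousLinearMap.neg_apply,
          ContinuousLinearMap.flip_apply, hsymξ]
      rw [h3, h4, hpair, map_neg]
    -- the Euler–Lagrange equations for the constant field and for B
    have hELv : dvf Γ (dvf (vLift (fun _ : E => v)) L) = dvf (cLift (fun _ : E => v)) L :=
      funext (hEL _ contDiff_const)
    have hELB : dvf Γ (dvf (vLift B) L) = dvf (cLift B) L := funext (hEL B hBs)
    -- commutator computation
    have h5 := dvf_dvf (cLift ξ) Γ (dvf (vLift (fun _ : E => v)) L) hfs p₀ (hΓd p₀)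
    have h6 := dvf_dvf Γ (cLift ξ) (dvf (vLift (fun _ : E => v)) L) hfs p₀ (hXd p₀)
    have hsymf := sym2 _ hfs p₀ (cLift ξ p₀) (Γ p₀)
    have hchain : dvf (cLift ξ) (dvf Γ (dvf (vLift (fun _ : E => v)) L)) p₀
        = dvf Γ (dvf (cLift ξ) (dvf (vLift (fun _ : E => v)) L)) p₀ := by
      rw [hELv, hE4, ← hELB, hE3]
    rw [hchain, h6, hsymf] at h5
    have hfin : fderiv ℝ (dvf (vLift (fun _ : E => v)) L) p₀ (fderiv ℝ Γ p₀ (cLift ξ p₀))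
        = fderiv ℝ (dvf (vLift (fun _ : E => v)) L) p₀ (fderiv ℝ (cLift ξ) p₀ (Γ p₀)) := by
      linarith
    have hlie : lieVF (cLift ξ) Γ p₀
        = fderiv ℝ Γ p₀ (cLift ξ p₀) - fderiv ℝ (cLift ξ) p₀ (Γ p₀) := rfl
    rw [hlie, map_sub, hfin, sub_self]
  funext p₀
  show lieVF (cLift ξ) Γ p₀ = (0 : E × E)
  have hw : (lieVF (cLift ξ) Γ p₀).2 = 0 := by
    apply hreg p₀
    intro v
    have h := key v p₀
    have hl : lieVF (cLift ξ) Γ p₀ = ((0 : E), (lieVF (cLift ξ) Γ p₀).2) :=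
      Prod.ext_iff.mpr ⟨hA p₀, rfl⟩
    rw [hl] at h
    exact h
  exact Prod.ext_iff.mpr ⟨hA p₀, hw⟩
end

section
/- For Wong's equations: under the assumptions that h_{ab}Υ^b_{ic} is skew-symmetric in the appropriate indices and K^c_{ij} is skew-symmetric in i,j, the Lagrange-Poincaré equations of the Kaluza-Klein Lagrangian L = ½ g_{ij} v^i v^j + ½ h_{ab} w^a w^b reduce to Wong's equations: ẍ^i + Γ^i_{jk} ẋ^j ẋ^k = g^{ik} h_{bc} K^c_{jk} ẋ^j w^b and ẇ^a + Υ^a_{jb} ẋ^j w^b = 0, where Γ^i_{jk} are the Christoffel symbols of the reduced metric g_{ij}. In particular K^a_{ij} v^i v^j = 0 and C^b_{ac} w^a w^c = 0. -/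
open scoped BigOperators

section WqHelpers

private lemma wq_skew_quad0 {α : Type*} [Fintype α] (M : α → α → ℝ)
    (hM : ∀ i j, M i j = -M j i) : ∑ i, ∑ j, M i j = 0 := by
  have h1 : (∑ i, ∑ j, M i j) = -(∑ i, ∑ j, M i j) := by
    nth_rewrite 1 [Finset.sum_comm]
    rw [← Finset.sum_neg_distrib]
    refine Finset.sum_congr rfl fun i _ => ?_
    rw [← Finset.sum_neg_distrib]
    exact Finset.sum_congr rfl fun j _ => hM j i
  linarith

private lemma wq_solve_lin {n : ℕ} (h hinv : Fin n → Fin n → ℝ)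
    (hhinv : ∀ a b, ∑ c, hinv a c * h c b = if a = b then 1 else 0)
    (u S : Fin n → ℝ) (hu : ∀ a, ∑ b, h a b * u b = S a) (a : Fin n) :
    u a = ∑ c, hinv a c * S c := by
  have e1 : u a = ∑ b, (∑ c, hinv a c * h c b) * u b := by
    simp [hhinv, Finset.sum_ite_eq', Finset.mem_univ]
  have e2 : ∑ b, (∑ c, hinv a c * h c b) * u b = ∑ c, hinv a c * ∑ b, h c b * u b := by
    simp_rw [Finset.sum_mul, Finset.mul_sum]
    rw [Finset.sum_comm]
    simp_rw [mul_assoc]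
  rw [e1, e2]
  exact Finset.sum_congr rfl fun c _ => by rw [hu c]

private lemma wq_sum_rot3 {α β γ : Type*} [Fintype α] [Fintype β] [Fintype γ]
    (F : α → β → γ → ℝ) :
    ∑ a, ∑ b, ∑ c, F a b c = ∑ b, ∑ c, ∑ a, F a b c := by
  rw [Finset.sum_comm]
  exact Finset.sum_congr rfl fun b _ => Finset.sum_comm

private lemma wq_hasDerivAt_comp_pi {m : ℕ} (f : (Fin m → ℝ) → ℝ) (hf : ContDiff ℝ (⊤ : ℕ∞) f)
    (x : ℝ → Fin m → ℝ) (hx : ∀ i, Differentiable ℝ (fun t => x t i)) (t : ℝ) :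
    HasDerivAt (fun s => f (x s))
      (∑ k, fderiv ℝ f (x t) (Pi.single k 1) * deriv (fun r => x r k) t) t := by
  have hX : HasDerivAt x (fun k => deriv (fun r => x r k) t) t := by
    rw [hasDerivAt_pi]
    intro k
    exact (hx k).differentiableAt.hasDerivAt
  have hfd : HasFDerivAt f (fderiv ℝ f (x t)) (x t) :=
    (hf.differentiable (by simp) (x t)).hasFDerivAt
  have hcomp := hfd.comp_hasDerivAt t hX
  refine hcomp.congr_deriv ?_
  symm
  have hv : (fun k => deriv (fun r => x r k) t)
      = ∑ k, deriv (fun r => x r k) t • (Pi.single k 1 : Fin m → ℝ) := by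
    funext j
    simp [Finset.sum_apply, Pi.single_apply, mul_comm]
  rw [hv, map_sum]
  refine Finset.sum_congr rfl fun k _ => ?_
  rw [map_smul]
  simp [mul_comm]

/-- The `C`-term vanishes. -/
private lemma wq_cterm {kdim : ℕ} (h : Fin kdim → Fin kdim → ℝ)
    (hhsym : ∀ a b, h a b = h b a)
    (C : Fin kdim → Fin kdim → Fin kdim → ℝ)
    (hCskew : ∀ c a b, C c a b = -C c b a)
    (hbiinv : ∀ a b c, ∑ d, (h a d * C d b c + h b d * C d a c) = 0)
    (a : Fin kdim) (u : Fin kdim → ℝ) :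
    ∑ b, (∑ c, C b a c * u c) * (∑ d, h b d * u d) = 0 := by
  have key : ∑ b, (∑ c, C b a c * u c) * (∑ d, h b d * u d)
      = ∑ c, ∑ d, (∑ b, h d b * C b a c) * u c * u d := by
    simp_rw [Finset.sum_mul, Finset.mul_sum]
    rw [Finset.sum_comm]
    refine Finset.sum_congr rfl fun c _ => ?_
    rw [Finset.sum_comm]
    refine Finset.sum_congr rfl fun d _ => ?_
    refine Finset.sum_congr rfl fun b _ => ?_
    rw [hhsym d b]; ring
  rw [key]
  refine wq_skew_quad0 (fun c d => (∑ b, h d b * C b a c) * u c * u d) (fun c d => ?_)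
  have h1 := hbiinv d a c
  have h2 := hbiinv c a d
  rw [Finset.sum_add_distrib] at h1 h2
  have e1 : ∑ b, h d b * C b a c = -∑ b, h a b * C b d c := by linarith
  have e2 : ∑ b, h c b * C b a d = -∑ b, h a b * C b c d := by linarith
  have e3 : ∑ b, h a b * C b d c = -∑ b, h a b * C b c d := by
    rw [← Finset.sum_neg_distrib]
    exact Finset.sum_congr rfl fun b _ => by rw [hCskew _ d c]; ring
  rw [e1, e2, e3]
  ring

/-- The `Υ`-term in the second Lagrange–Poincaré equation. -/
private lemma wq_ups {mdim kdim : ℕ} (h : Fin kdim → Fin kdim → ℝ)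
    (hhsym : ∀ a b, h a b = h b a)
    (Y : Fin kdim → Fin mdim → Fin kdim → ℝ)
    (hsk : ∀ (i : Fin mdim) (b c : Fin kdim),
      ∑ e, h b e * Y e i c + ∑ e, h c e * Y e i b = 0)
    (a : Fin kdim) (v : Fin mdim → ℝ) (w : Fin kdim → ℝ) :
    ∑ b, (∑ i, Y b i a * v i) * (∑ d, h b d * w d)
      + ∑ b, h a b * (∑ j, ∑ c, Y b j c * v j * w c) = 0 := by
  have key1 : ∑ b, (∑ i, Y b i a * v i) * (∑ d, h b d * w d)
      = ∑ i, ∑ d, (∑ b, h d b * Y b i a) * v i * w d := by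
    simp_rw [Finset.sum_mul, Finset.mul_sum]
    rw [Finset.sum_comm]
    refine Finset.sum_congr rfl fun i _ => ?_
    rw [Finset.sum_comm]
    refine Finset.sum_congr rfl fun d _ => ?_
    refine Finset.sum_congr rfl fun b _ => ?_
    rw [hhsym d b]; ring
  have key2 : ∑ b, h a b * (∑ j, ∑ c, Y b j c * v j * w c)
      = ∑ i, ∑ d, (∑ b, h a b * Y b i d) * v i * w d := by
    simp_rw [Finset.mul_sum, Finset.sum_mul]
    rw [Finset.sum_comm]
    refine Finset.sum_congr rfl fun i _ => ?_
    rw [Finset.sum_comm]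
    refine Finset.sum_congr rfl fun d _ => ?_
    refine Finset.sum_congr rfl fun b _ => ?_
    ring
  rw [key1, key2, ← Finset.sum_add_distrib]
  refine Finset.sum_eq_zero fun i _ => ?_
  rw [← Finset.sum_add_distrib]
  refine Finset.sum_eq_zero fun d _ => ?_
  linear_combination (v i * w d) * hsk i d a

/-- The `Υ`-term in the first Lagrange–Poincaré equation vanishes. -/
private lemma wq_ups0 {mdim kdim : ℕ} (h : Fin kdim → Fin kdim → ℝ)
    (hhsym : ∀ a b, h a b = h b a)
    (Y : Fin kdim → Fin mdim → Fin kdim → ℝ)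
    (hsk : ∀ (i : Fin mdim) (b c : Fin kdim),
      ∑ e, h b e * Y e i c + ∑ e, h c e * Y e i b = 0)
    (i : Fin mdim) (w : Fin kdim → ℝ) :
    ∑ a, (∑ b, Y a i b * w b) * (∑ c, h a c * w c) = 0 := by
  have key : ∑ a, (∑ b, Y a i b * w b) * (∑ c, h a c * w c)
      = ∑ b, ∑ c, (∑ a, h c a * Y a i b) * w b * w c := by
    simp_rw [Finset.sum_mul, Finset.mul_sum]
    rw [Finset.sum_comm]
    refine Finset.sum_congr rfl fun b _ => ?_
    rw [Finset.sum_comm]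
    refine Finset.sum_congr rfl fun c _ => ?_
    refine Finset.sum_congr rfl fun a _ => ?_
    rw [hhsym a c]; ring
  rw [key]
  refine wq_skew_quad0 (fun b c => (∑ a, h c a * Y a i b) * w b * w c) (fun b c => ?_)
  have := hsk i b c
  have e1 : ∑ a, h c a * Y a i b = -∑ a, h b a * Y a i c := by linarith
  rw [e1]
  rw [show (-∑ a, h b a * Y a i c) * w b * w c
      = ∑ a, -(h b a * Y a i c * w b * w c) from by
    rw [← Finset.sum_neg_distrib]
    rw [show (∑ a, -(h b a * Y a i c)) * w b * w c
        = ∑ a, -(h b a * Y a i c) * w b * w c from by rw [Finset.sum_mul, Finset.sum_mul]]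
    exact Finset.sum_congr rfl fun a _ => by ring]
  rw [show (∑ a, h b a * Y a i c) * w c * w b
      = ∑ a, h b a * Y a i c * w c * w b from by rw [Finset.sum_mul, Finset.sum_mul]]
  rw [← Finset.sum_neg_distrib]
  exact Finset.sum_congr rfl fun a _ => by ring

/-- Cancellation of metric-derivative terms against the Christoffel symbols. -/
private lemma wq_deriv_cancel {m : ℕ} (gv : Fin m → ℝ) (G : Fin m → Fin m → Fin m → ℝ)
    (v : Fin m → ℝ) :
    ∑ i, gv i * ((1/2) * ∑ j, ∑ l, G j l i * v j * v l - ∑ j, (∑ k, G i j k * v k) * v j)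
    + ∑ j, ∑ l, ((1/2) * ∑ m', gv m' * (G m' l j + G m' j l - G j l m')) * v j * v l
    = 0 := by
  have hA : ∑ i, gv i * ((1/2) * ∑ j, ∑ l, G j l i * v j * v l - ∑ j, (∑ k, G i j k * v k) * v j)
      = ∑ j, ∑ l, ∑ i, ((1/2) * gv i * G j l i - gv i * G i j l) * v j * v l := by
    simp only [Finset.mul_sum, Finset.sum_mul, mul_sub, sub_mul, Finset.sum_sub_distrib]
    congr 1 <;>
    · rw [wq_sum_rot3]
      exact Finset.sum_congr rfl fun _ _ => Finset.sum_congr rfl fun _ _ =>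
        Finset.sum_congr rfl fun _ _ => by ring
  have hB : ∑ j, ∑ l, ((1/2) * ∑ m', gv m' * (G m' l j + G m' j l - G j l m')) * v j * v l
      = ∑ j, ∑ l, ∑ i, ((1/2) * gv i * (G i l j + G i j l - G j l i)) * v j * v l := by
    refine Finset.sum_congr rfl fun j _ => Finset.sum_congr rfl fun l _ => ?_
    rw [show ((1/2) * ∑ m', gv m' * (G m' l j + G m' j l - G j l m')) * v j * v l
        = ∑ m', (1/2) * (gv m' * (G m' l j + G m' j l - G j l m')) * v j * v l from by
      rw [Finset.mul_sum, Finset.sum_mul, Finset.sum_mul]]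
    exact Finset.sum_congr rfl fun i _ => by ring
  rw [hA, hB, ← Finset.sum_add_distrib]
  simp_rw [← Finset.sum_add_distrib]
  refine wq_skew_quad0
    (fun j l => ∑ i, (((1/2) * gv i * G j l i - gv i * G i j l) * v j * v l
      + ((1/2) * gv i * (G i l j + G i j l - G j l i)) * v j * v l)) (fun j l => ?_)
  rw [← Finset.sum_neg_distrib]
  exact Finset.sum_congr rfl fun i _ => by ring

/-- The `K`-term matches the right-hand side of Wong's first equation. -/
private lemma wq_kmatch {mdim kdim : ℕ} (gv : Fin mdim → Fin mdim → ℝ)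
    (h : Fin kdim → Fin kdim → ℝ) (hhsym : ∀ a b, h a b = h b a)
    (K : Fin kdim → Fin mdim → Fin mdim → ℝ)
    (hKskew : ∀ a i j, K a i j = -K a j i)
    (i0 : Fin mdim) (v : Fin mdim → ℝ) (w : Fin kdim → ℝ) :
    ∑ i, gv i0 i * (-∑ a, (∑ l, K a i l * v l) * (∑ c, h a c * w c))
      = ∑ l, ∑ b, ∑ c, ∑ j, gv i0 l * h b c * K c j l * v j * w b := by
  refine Finset.sum_congr rfl fun i _ => ?_
  rw [mul_neg, Finset.mul_sum]
  simp only [Finset.sum_mul, Finset.mul_sum]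
  rw [neg_eq_iff_eq_neg]
  simp only [← Finset.sum_neg_distrib]
  rw [Finset.sum_comm]
  refine Finset.sum_congr rfl fun c _ => Finset.sum_congr rfl fun a _ =>
    Finset.sum_congr rfl fun l _ => ?_
  rw [hKskew a i l, hhsym a c]
  ring

end WqHelpers

/-- The Christoffel symbols `Γ^i_{jk}` of a metric `g` on `ℝ^m` (with pointwise
inverse `ginv`). -/
noncomputable def christoffel {m : ℕ}
    (gm ginv : Fin m → Fin m → (Fin m → ℝ) → ℝ)
    (i j k : Fin m) (x : Fin m → ℝ) : ℝ :=
  (1/2) * ∑ l, ginv i l x *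
    (fderiv ℝ (gm l k) x (Pi.single j 1) + fderiv ℝ (gm l j) x (Pi.single k 1)
      - fderiv ℝ (gm j k) x (Pi.single l 1))

/-- Wong's equations: for the Kaluza-Klein Lagrangian `l = ½ g_{ij}v^iv^j + ½ h_{ab}w^aw^b`
with `h` bi-invariant and constant, the Lagrange-Poincaré equations reduce to
`ẍ^i + Γ^i_{jk} ẋ^j ẋ^k = g^{ik} h_{bc} K^c_{jk} ẋ^j w^b` and
`ẇ^a + Υ^a_{jb} ẋ^j w^b = 0`; in particular `K^a_{ij}v^iv^j = 0` and
`C^b_{ac} w^a w^c = 0`. -/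
theorem wong_equations {mdim kdim : ℕ}
    (gm ginv : Fin mdim → Fin mdim → (Fin mdim → ℝ) → ℝ)
    (hgsym : ∀ i j x, gm i j x = gm j i x)
    (hgsmooth : ∀ i j, ContDiff ℝ (⊤ : ℕ∞) (gm i j))
    (hginv : ∀ x i j, ∑ l, ginv i l x * gm l j x = if i = j then 1 else 0)
    (h hinv : Fin kdim → Fin kdim → ℝ)
    (hhsym : ∀ a b, h a b = h b a)
    (hhinv : ∀ a b, ∑ c, hinv a c * h c b = if a = b then 1 else 0)
    (C : Fin kdim → Fin kdim → Fin kdim → ℝ)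
    (hCskew : ∀ c a b, C c a b = -C c b a)
    (hbiinv : ∀ a b c, ∑ d, (h a d * C d b c + h b d * C d a c) = 0)
    (K : Fin kdim → Fin mdim → Fin mdim → (Fin mdim → ℝ) → ℝ)
    (hKskew : ∀ a i j x, K a i j x = -K a j i x)
    (Υ : Fin kdim → Fin mdim → Fin kdim → (Fin mdim → ℝ) → ℝ)
    (hΥskew : ∀ i b c x, ∑ a, h b a * Υ a i c x + ∑ a, h c a * Υ a i b x = 0)
    (x : ℝ → Fin mdim → ℝ) (w : ℝ → Fin kdim → ℝ)
    (hx : ∀ i, Differentiable ℝ (fun t => x t i))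
    (hx' : ∀ i, Differentiable ℝ (deriv (fun t => x t i)))
    (hw : ∀ a, Differentiable ℝ (fun t => w t a))
    -- the Lagrange-Poincaré equations for `l = ½ g_{ij}v^iv^j + ½ h_{ab}w^aw^b`
    (hLP1 : ∀ (i : Fin mdim) (t : ℝ),
      deriv (fun s => ∑ j, gm i j (x s) * deriv (fun r => x r j) s) t
        - (1/2) * ∑ j, ∑ l, fderiv ℝ (gm j l) (x t) (Pi.single i 1)
            * deriv (fun r => x r j) t * deriv (fun r => x r l) t
      = -∑ a, (∑ l, K a i l (x t) * deriv (fun r => x r l) t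
              + ∑ b, Υ a i b (x t) * w t b) * (∑ c, h a c * w t c))
    (hLP2 : ∀ (a : Fin kdim) (t : ℝ),
      deriv (fun s => ∑ b, h a b * w s b) t
      = ∑ b, (∑ i, Υ b i a (x t) * deriv (fun r => x r i) t
              + ∑ c, C b a c * w t c) * (∑ d, h b d * w t d)) :
    (∀ (i : Fin mdim) (t : ℝ),
      deriv (fun s => deriv (fun r => x r i) s) t
        + ∑ j, ∑ l, christoffel gm ginv i j l (x t)
            * deriv (fun r => x r j) t * deriv (fun r => x r l) t
      = ∑ l, ∑ b, ∑ c, ∑ j, ginv i l (x t) * h b c * K c j l (x t)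
            * deriv (fun r => x r j) t * w t b) ∧
    (∀ (a : Fin kdim) (t : ℝ),
      deriv (fun s => w s a) t
        + ∑ j, ∑ b, Υ a j b (x t) * deriv (fun r => x r j) t * w t b = 0) ∧
    (∀ (a : Fin kdim) (y : Fin mdim → ℝ) (v : Fin mdim → ℝ),
      ∑ i, ∑ j, K a i j y * v i * v j = 0) ∧
    (∀ (b : Fin kdim) (u : Fin kdim → ℝ),
      ∑ a, ∑ c, C b a c * u a * u c = 0) := by
  refine ⟨?_, ?_, ?_, ?_⟩
  · -- Wong's first equation
    intro i0 t
    have hD : ∀ i, deriv (fun s => ∑ j, gm i j (x s) * deriv (fun r => x r j) s) t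
        = ∑ j, ((∑ k, fderiv ℝ (gm i j) (x t) (Pi.single k 1) * deriv (fun r => x r k) t)
              * deriv (fun r => x r j) t
            + gm i j (x t) * deriv (fun s => deriv (fun r => x r j) s) t) := by
      intro i
      have hda : HasDerivAt (fun s => ∑ j, gm i j (x s) * deriv (fun r => x r j) s)
          (∑ j, ((∑ k, fderiv ℝ (gm i j) (x t) (Pi.single k 1) * deriv (fun r => x r k) t)
              * deriv (fun r => x r j) t
            + gm i j (x t) * deriv (fun s => deriv (fun r => x r j) s) t)) t := by
        refine HasDerivAt.fun_sum fun j _ => ?_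
        exact (wq_hasDerivAt_comp_pi (gm i j) (hgsmooth i j) x hx t).mul
          ((hx' j t).hasDerivAt)
      exact hda.deriv
    have hU : ∀ i, ∑ a, (∑ b, Υ a i b (x t) * w t b) * (∑ c, h a c * w t c) = 0 := by
      intro i
      have := wq_ups0 h hhsym (fun a j b => Υ a j b (x t))
        (fun j b c => hΥskew j b c (x t)) i (w t)
      simpa using this
    have hE : ∀ i, ∑ j, gm i j (x t) * deriv (fun s => deriv (fun r => x r j) s) t
        = -∑ a, (∑ l, K a i l (x t) * deriv (fun r => x r l) t)
              * (∑ c, h a c * w t c)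
          + (1/2) * ∑ j, ∑ l, fderiv ℝ (gm j l) (x t) (Pi.single i 1)
              * deriv (fun r => x r j) t * deriv (fun r => x r l) t
          - ∑ j, (∑ k, fderiv ℝ (gm i j) (x t) (Pi.single k 1)
              * deriv (fun r => x r k) t) * deriv (fun r => x r j) t := by
      intro i
      have hlp := hLP1 i t
      rw [hD i, Finset.sum_add_distrib] at hlp
      have hsplit : (-∑ a, (∑ l, K a i l (x t) * deriv (fun r => x r l) t
              + ∑ b, Υ a i b (x t) * w t b) * (∑ c, h a c * w t c))
          = (-∑ a, (∑ l, K a i l (x t) * deriv (fun r => x r l) t) * (∑ c, h a c * w t c))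
            - ∑ a, (∑ b, Υ a i b (x t) * w t b) * (∑ c, h a c * w t c) := by
        simp only [add_mul, Finset.sum_add_distrib]
        ring
      rw [hsplit, hU i] at hlp
      linarith
    have hsolve := wq_solve_lin (fun i j => gm i j (x t)) (fun i j => ginv i j (x t))
      (fun i j => hginv (x t) i j)
      (fun j => deriv (fun s => deriv (fun r => x r j) s) t)
      (fun i => -∑ a, (∑ l, K a i l (x t) * deriv (fun r => x r l) t)
              * (∑ c, h a c * w t c)
          + (1/2) * ∑ j, ∑ l, fderiv ℝ (gm j l) (x t) (Pi.single i 1)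
              * deriv (fun r => x r j) t * deriv (fun r => x r l) t
          - ∑ j, (∑ k, fderiv ℝ (gm i j) (x t) (Pi.single k 1)
              * deriv (fun r => x r k) t) * deriv (fun r => x r j) t)
      (fun i => hE i) i0
    have hKm := wq_kmatch (fun p q => ginv p q (x t)) h hhsym
      (fun a i j => K a i j (x t)) (fun a i j => hKskew a i j (x t)) i0
      (fun j => deriv (fun r => x r j) t) (w t)
    have hdc := wq_deriv_cancel (fun i => ginv i0 i (x t))
      (fun p q r => fderiv ℝ (gm p q) (x t) (Pi.single r 1))
      (fun j => deriv (fun r => x r j) t)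
    have hchr : ∑ j, ∑ l, christoffel gm ginv i0 j l (x t)
          * deriv (fun r => x r j) t * deriv (fun r => x r l) t
        = ∑ j, ∑ l, ((1/2) * ∑ m', ginv i0 m' (x t)
            * (fderiv ℝ (gm m' l) (x t) (Pi.single j 1)
              + fderiv ℝ (gm m' j) (x t) (Pi.single l 1)
              - fderiv ℝ (gm j l) (x t) (Pi.single m' 1)))
          * deriv (fun r => x r j) t * deriv (fun r => x r l) t := by
      simp only [christoffel]
    have split3 : ∑ i, ginv i0 i (x t)
          * (-∑ a, (∑ l, K a i l (x t) * deriv (fun r => x r l) t)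
              * (∑ c, h a c * w t c)
            + (1/2) * ∑ j, ∑ l, fderiv ℝ (gm j l) (x t) (Pi.single i 1)
              * deriv (fun r => x r j) t * deriv (fun r => x r l) t
            - ∑ j, (∑ k, fderiv ℝ (gm i j) (x t) (Pi.single k 1)
              * deriv (fun r => x r k) t) * deriv (fun r => x r j) t)
        = ∑ i, ginv i0 i (x t)
            * (-∑ a, (∑ l, K a i l (x t) * deriv (fun r => x r l) t)
              * (∑ c, h a c * w t c))
          + ∑ i, ginv i0 i (x t)
            * ((1/2) * ∑ j, ∑ l, fderiv ℝ (gm j l) (x t) (Pi.single i 1)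
              * deriv (fun r => x r j) t * deriv (fun r => x r l) t
            - ∑ j, (∑ k, fderiv ℝ (gm i j) (x t) (Pi.single k 1)
              * deriv (fun r => x r k) t) * deriv (fun r => x r j) t) := by
      rw [← Finset.sum_add_distrib]
      exact Finset.sum_congr rfl fun i _ => by ring
    rw [hchr]
    rw [hsolve, split3]
    linarith [hKm, hdc]
  · -- Wong's second equation
    intro a0 t
    set v : Fin mdim → ℝ := fun j => deriv (fun r => x r j) t with hv
    have hF : ∀ a, ∑ b, h a b *
        (deriv (fun s => w s b) t + ∑ j, ∑ c, Υ b j c (x t) * v j * w t c) = 0 := by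
      intro a
      have hLhs : deriv (fun s => ∑ b, h a b * w s b) t
          = ∑ b, h a b * deriv (fun s => w s b) t := by
        have : HasDerivAt (fun s => ∑ b, h a b * w s b)
            (∑ b, h a b * deriv (fun s => w s b) t) t := by
          refine HasDerivAt.fun_sum fun b _ => ?_
          exact ((hw b t).hasDerivAt).const_mul (h a b)
        exact this.deriv
      have hlp := hLP2 a t
      rw [hLhs] at hlp
      simp only [add_mul, Finset.sum_add_distrib] at hlp
      have hC0 : ∑ b, (∑ c, C b a c * w t c) * (∑ d, h b d * w t d) = 0 :=
        wq_cterm h hhsym C hCskew hbiinv a (w t)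
      have hU := wq_ups h hhsym (fun a i b => Υ a i b (x t))
        (fun i b c => hΥskew i b c (x t)) a v (w t)
      simp only [Finset.mul_sum, mul_add, Finset.sum_add_distrib]
      have expand : ∑ b, h a b * (∑ j, ∑ c, Υ b j c (x t) * v j * w t c)
          = ∑ b, ∑ j, ∑ c, h a b * (Υ b j c (x t) * v j * w t c) := by
        refine Finset.sum_congr rfl fun b _ => ?_
        rw [Finset.mul_sum]
        exact Finset.sum_congr rfl fun j _ => by rw [Finset.mul_sum]
      rw [← expand]
      linarith [hU, hC0, hlp]
    have key := wq_solve_lin h hinv hhinv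
      (fun b => deriv (fun s => w s b) t + ∑ j, ∑ c, Υ b j c (x t) * v j * w t c)
      (fun _ => 0) (fun a => by simpa using hF a) a0
    simpa using key
  · intro a y v
    exact wq_skew_quad0 (fun i j => K a i j y * v i * v j)
      (fun i j => by rw [hKskew a i j y]; ring)
  · intro b u
    exact wq_skew_quad0 (fun a c => C b a c * u a * u c)
      (fun a c => by rw [hCskew b a c]; ring)
end

section
/- For the affine group G of the line, the reconstruction equations θ̇₁ = w₁(t) + qẋ(t), e^{−θ₁}φ̇₁ = −φ₀w₁(t) + e^{θ_m(t)}w₂(t) − qφ₀ẋ(t), with θ_m(t) = −qx(t) + qx₀ + θ₀, the solutions x, w₁, w₂ of the reduced equations as above, and initial conditions θ₁(0) = 0, φ₁(0) = 0, have the unique solution θ₁(t) = −½t² + (qẋ₀ + θ̇₀)t and φ₁(t) = φ̇₀ t + φ₀(1 − exp(½(2qẋ₀ − t + 2θ̇₀)t)); moreover composing via the group law gives θ(t) = θ₁(t) + θ_m(t) = ½t²/(q²−1) + θ̇₀t + θ₀ and φ(t) = e^{θ₁(t)}φ₀ + φ₁(t) = φ̇₀t + φ₀, recovering the full Euler-Lagrange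 solution. -/
/-!
With `c = qẋ₀ + θ̇₀`, substituting the reduced solutions turns the first reconstruction equation
into `θ̇₁ = c - t` (the denominators `q² - 1` cancel), so `θ₁ = -½t² + ct`. For this `θ₁` the
exponents of `e^{θ₁}`, `e^{θ_m}` and `w₂ / φ̇₀` add up to zero, so `e^{θ₁ + θ_m} w₂ = φ̇₀` and the
second equation becomes `φ̇₁ = φ̇₀ - φ₀ θ̇₁ e^{θ₁}`, whose solution vanishing at `0` is
`φ̇₀t + φ₀(1 - e^{θ₁})`. Uniqueness is the mean value theorem each time.
-/

open Real

theorem eq_of_deriv_eq_of_hasDerivAt {E : Type*} [NormedAddCommGroup E] [NormedSpace ℝ E]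
    {f g g' : ℝ → E} (hf : Differentiable ℝ f) (hg : ∀ t, HasDerivAt g (g' t) t)
    (hfg : ∀ t, deriv f t = g' t) (t₀ : ℝ) (h₀ : f t₀ = g t₀) : f = g := by
  have := isOpen_univ.eqOn_of_deriv_eq isPreconnected_univ hf.differentiableOn
    (fun t _ => (hg t).differentiableAt.differentiableWithinAt)
    (fun t _ => (hfg t).trans (hg t).deriv.symm) (Set.mem_univ t₀) h₀
  exact funext fun t => this (Set.mem_univ t)

theorem hasDerivAt_quadratic (a b t : ℝ) :
    HasDerivAt (fun s => a * s ^ 2 + b * s) (2 * a * t + b) t := by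
  refine (((hasDerivAt_pow 2 t).const_mul a).fun_add
    ((hasDerivAt_id' t).const_mul b)).congr_deriv ?_
  push_cast; ring

theorem eq_of_deriv_eq_sub_mul_deriv_mul_exp {θ φ : ℝ → ℝ} (hθ : Differentiable ℝ θ)
    (hφ : Differentiable ℝ φ) (a b : ℝ) (hφ' : ∀ t, deriv φ t = a - b * deriv θ t * exp (θ t))
    (hθ₀ : θ 0 = 0) (hφ₀ : φ 0 = 0) : φ = fun t => a * t + b * (1 - exp (θ t)) := by
  refine eq_of_deriv_eq_of_hasDerivAt hφ (fun t => ?_) hφ' 0 (by simp [hθ₀, hφ₀])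
  refine (((hasDerivAt_id' t).const_mul a).fun_add
    (((hθ t).hasDerivAt.exp.const_sub 1).const_mul b)).congr_deriv ?_
  ring

theorem affine_reconstruction_exp_product_eq_one (q x₀ xd₀ θ₀ θd₀ t : ℝ) (hq : q ^ 2 ≠ 1) :
    exp (-(1/2) * t ^ 2 + (q * xd₀ + θd₀) * t)
      * exp (-(q * (-(1/2) * (q * t^2 / (q^2 - 1)) + xd₀ * t + x₀)) + q * x₀ + θ₀)
      * exp (-θ₀ - ((1/2) * t^2 - θd₀ * t + θd₀ * q^2 * t) / (q^2 - 1)) = 1 := by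
  rw [← exp_add, ← exp_add, exp_eq_one_iff]
  field_simp
  ring

theorem affine_reconstruction_general
    (q x₀ xd₀ θ₀ θd₀ φ₀ φd₀ : ℝ) (hq : q^2 ≠ 1)
    (θ₁ φ₁ : ℝ → ℝ)
    (hθ₁ : Differentiable ℝ θ₁) (hφ₁ : Differentiable ℝ φ₁) :
    let x : ℝ → ℝ := fun t => -(1/2) * (q * t^2 / (q^2 - 1)) + xd₀ * t + x₀
    let w₁ : ℝ → ℝ := fun t => t / (q^2 - 1) + θd₀
    let w₂ : ℝ → ℝ := fun t => φd₀ * Real.exp (-θ₀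
      - ((1/2) * t^2 - θd₀ * t + θd₀ * q^2 * t) / (q^2 - 1))
    let θm : ℝ → ℝ := fun t => -(q * x t) + q * x₀ + θ₀
    (∀ t, deriv θ₁ t = w₁ t + q * deriv x t) →
    (∀ t, Real.exp (-(θ₁ t)) * deriv φ₁ t
      = -(φ₀ * w₁ t) + Real.exp (θm t) * w₂ t - q * φ₀ * deriv x t) →
    θ₁ 0 = 0 → φ₁ 0 = 0 →
    ∀ t : ℝ,
      θ₁ t = -(1/2) * t^2 + (q * xd₀ + θd₀) * t ∧
      φ₁ t = φd₀ * t + φ₀ * (1 - Real.exp ((1/2) * (2*q*xd₀ - t + 2*θd₀) * t)) ∧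
      θ₁ t + θm t = (1/2) * (t^2 / (q^2 - 1)) + θd₀ * t + θ₀ ∧
      Real.exp (θ₁ t) * φ₀ + φ₁ t = φd₀ * t + φ₀ := by
  intro x w₁ w₂ θm hθ₁' hφ₁' hθ₁0 hφ₁0
  have hx' (t : ℝ) : deriv x t = xd₀ - q * t / (q ^ 2 - 1) := by
    have hx : x = fun s => -(1/2) * q / (q ^ 2 - 1) * s ^ 2 + xd₀ * s + x₀ := by
      funext s; simp only [x]; ring
    rw [hx, ((hasDerivAt_quadratic _ _ t).add_const x₀).deriv]; ring
  have hθ₁_eq : θ₁ = fun t => -(1/2) * t ^ 2 + (q * xd₀ + θd₀) * t := by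
    refine eq_of_deriv_eq_of_hasDerivAt hθ₁ (hasDerivAt_quadratic _ _) (fun t => ?_) 0
      (by simp [hθ₁0])
    rw [hθ₁' t, hx' t]; simp only [w₁]; field_simp; ring
  have hφ₁_eq : φ₁ = fun t => φd₀ * t + φ₀ * (1 - exp (θ₁ t)) := by
    refine eq_of_deriv_eq_sub_mul_deriv_mul_exp hθ₁ hφ₁ _ _ (fun t => ?_) hθ₁0 hφ₁0
    have hcancel : exp (θ₁ t) * (exp (θm t) * w₂ t) = φd₀ := by
      simp only [hθ₁_eq, θm, x, w₂]
      linear_combination φd₀ * affine_reconstruction_exp_product_eq_one q x₀ xd₀ θ₀ θd₀ t hq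
    have hinv : exp (θ₁ t) * exp (-θ₁ t) = 1 := by rw [← exp_add, add_neg_cancel, exp_zero]
    rw [hθ₁' t]
    linear_combination exp (θ₁ t) * hφ₁' t + hcancel - deriv φ₁ t * hinv
  intro t
  refine ⟨by rw [hθ₁_eq], by rw [hφ₁_eq, hθ₁_eq]; ring_nf, ?_, by rw [hφ₁_eq]; ring⟩
  rw [hθ₁_eq]; simp only [θm, x]; field_simp; ring

/-- Reconstruction for the affine group: the reconstruction equations
`θ̇₁ = w₁ + qẋ`, `e^{−θ₁}φ̇₁ = −φ₀w₁ + e^{θ_m}w₂ − qφ₀ẋ` (with the horizontal-lift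
data `θ_m(t) = −qx(t) + qx₀ + θ₀` and the reduced solutions `x, w₁, w₂`) have,
with `θ₁(0) = 0`, `φ₁(0) = 0`, the unique solution
`θ₁(t) = −½t² + (qẋ₀ + θ̇₀)t`,
`φ₁(t) = φ̇₀t + φ₀(1 − exp(½(2qẋ₀ − t + 2θ̇₀)t))`;
composing via the group law recovers the Euler-Lagrange solution:
`θ₁ + θ_m = ½t²/(q²−1) + θ̇₀t + θ₀` and `e^{θ₁}φ₀ + φ₁ = φ̇₀t + φ₀`. -/
theorem affine_reconstruction
    (q x₀ xd₀ θ₀ θd₀ φ₀ φd₀ : ℝ) (hq : q^2 ≠ 1) (hφd₀ : 0 < φd₀)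
    (θ₁ φ₁ : ℝ → ℝ)
    (hθ₁ : Differentiable ℝ θ₁) (hφ₁ : Differentiable ℝ φ₁) :
    let x : ℝ → ℝ := fun t => -(1/2) * (q * t^2 / (q^2 - 1)) + xd₀ * t + x₀
    let w₁ : ℝ → ℝ := fun t => t / (q^2 - 1) + θd₀
    let w₂ : ℝ → ℝ := fun t => φd₀ * Real.exp (-θ₀
      - ((1/2) * t^2 - θd₀ * t + θd₀ * q^2 * t) / (q^2 - 1))
    let θm : ℝ → ℝ := fun t => -(q * x t) + q * x₀ + θ₀
    (∀ t, deriv θ₁ t = w₁ t + q * deriv x t) →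
    (∀ t, Real.exp (-(θ₁ t)) * deriv φ₁ t
      = -(φ₀ * w₁ t) + Real.exp (θm t) * w₂ t - q * φ₀ * deriv x t) →
    θ₁ 0 = 0 → φ₁ 0 = 0 →
    ∀ t : ℝ,
      θ₁ t = -(1/2) * t^2 + (q * xd₀ + θd₀) * t ∧
      φ₁ t = φd₀ * t + φ₀ * (1 - Real.exp ((1/2) * (2*q*xd₀ - t + 2*θd₀) * t)) ∧
      θ₁ t + θm t = (1/2) * (t^2 / (q^2 - 1)) + θd₀ * t + θ₀ ∧
      Real.exp (θ₁ t) * φ₀ + φ₁ t = φd₀ * t + φ₀ :=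
  affine_reconstruction_general q x₀ xd₀ θ₀ θd₀ φ₀ φd₀ hq θ₁ φ₁ hθ₁ hφ₁
end
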